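/- Let p ≥ 2, 1 ≤ t ≤ p, n ≥ 0 be integers and let e_1, …, e_{p+1} be nonnegative integers with e_1 ≥ 1. Then the number of (p+1)-tuples (T_1, …, T_{p+1}) of sets with T_1, …, T_t ⊆ [1,n+1], T_{t+1}, …, T_{p+1} ⊆ [1,n], |T_i| = e_i for all i, T_{k+1} ⊆ T_k for all 1 ≤ k ≤ p, and {k+1 : k ∈ T_{p+1}} ⊆ T_1, equals C(e_1−1, e_{p+1})·C(n+1−e_t, e_1−e_t)·C(n+1−e_{t+1}, e_t−e_{t+1})·C(n−e_{p+1}, e_{t+1}−e_{p+1})·χ_e([1,t])·χ_e([t+1,p+1]). -/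

import Mathlib

/-- Binomial coefficient `C(a,b)` for integers, with the convention that it is `0`
when `a < 0` or `b < 0` (and, as usual, when `b > a`), and `C(a,0) = 1` for `a ≥ 0`. -/
def intChoose (a b : ℤ) : ℕ :=
  if 0 ≤ a ∧ 0 ≤ b then a.toNat.choose b.toNat else 0

/-- `χ_e([r,s]) = ∏_{k=r}^{s−2} C(e_k − e_s, e_{k+1} − e_s)`, the empty product
being `1`. -/
def chiE (e : ℕ → ℕ) (r s : ℕ) : ℕ :=
  ∏ k ∈ Finset.Icc r (s - 2), intChoose ((e k : ℤ) - (e s : ℤ)) ((e (k + 1) : ℤ) - (e s : ℤ))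

/-!
A tuple is cut into `A = T 1 ⊇ B = T t ⊇ C = T (t + 1) ⊇ D = T (p + 1)` and the two chains
`T 1 ⊇ ⋯ ⊇ T t` and `T (t + 1) ⊇ ⋯ ⊇ T (p + 1)`. Choosing the sets of a chain with fixed ends one
at a time from the top gives `χ_e`, and choosing `B` between `C` and `A` gives
`C(e_1 - e_{t+1}, e_t - e_{t+1})`. For the triples `(A, C, D)`, `C` ranges over the sets between
`D` and `A \ {n + 1}`, so it remains to count the pairs `(A, D)` with `A ⊆ [1, M]`, `D ⊆ A` and
`D + 1 ⊆ A`: there are `C(a - 1, d) · C(M - d, a - d)` of them, by induction on `M` according to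
whether `M ∈ A` and `M - 1 ∈ D`. Pascal's rule and `C(n, k) C(k, j) = C(n, j) C(n - j, k - j)`
assemble the product.
-/

open Finset

lemma intChoose_of_nonneg {a b : ℤ} (ha : 0 ≤ a) (hb : 0 ≤ b) :
    intChoose a b = a.toNat.choose b.toNat :=
  if_pos ⟨ha, hb⟩

@[simp]
lemma intChoose_natCast (a b : ℕ) : intChoose a b = a.choose b := by
  simp [intChoose]

lemma intChoose_of_neg_left {a b : ℤ} (h : a < 0) : intChoose a b = 0 :=
  if_neg fun h' => h.not_ge h'.1

lemma intChoose_of_neg_right {a b : ℤ} (h : b < 0) : intChoose a b = 0 :=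
  if_neg fun h' => h.not_ge h'.2

lemma intChoose_zero_right {a : ℤ} (h : 0 ≤ a) : intChoose a 0 = 1 := by
  simp [intChoose_of_nonneg h le_rfl]

lemma intChoose_of_lt {a b : ℤ} (h : a < b) : intChoose a b = 0 := by
  rcases lt_or_ge a 0 with ha | ha
  · exact intChoose_of_neg_left ha
  · rw [intChoose_of_nonneg ha (by omega)]
    exact Nat.choose_eq_zero_of_lt (by omega)

lemma intChoose_succ_left {a : ℤ} (ha : 0 ≤ a) (b : ℤ) :
    intChoose (a + 1) b = intChoose a (b - 1) + intChoose a b := by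
  lift a to ℕ using ha
  rcases lt_trichotomy b 0 with hb | rfl | hb
  · simp [intChoose_of_neg_right, hb, show b - 1 < 0 by omega]
  · simp [intChoose_of_neg_right, intChoose_zero_right, add_nonneg]
  · obtain ⟨c, rfl⟩ : ∃ c : ℕ, b = c + 1 := ⟨(b - 1).toNat, by omega⟩
    rw [add_sub_cancel_right, ← Nat.cast_succ, ← Nat.cast_succ]
    simp only [intChoose_natCast]
    exact Nat.choose_succ_succ' a c

lemma intChoose_mul_intChoose (n k j : ℤ) :
    intChoose n k * intChoose k j = intChoose n j * intChoose (n - j) (k - j) := by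
  rcases lt_or_ge j 0 with hj | hj
  · simp [intChoose_of_neg_right hj]
  rcases lt_or_ge k j with hkj | hjk
  · simp [intChoose_of_lt hkj, intChoose_of_neg_right (show k - j < 0 by omega)]
  rcases lt_or_ge n k with hnk | hkn
  · rcases lt_or_ge n j with hnj | hjn
    · simp [intChoose_of_lt hnk, intChoose_of_lt hnj]
    · simp [intChoose_of_lt hnk, intChoose_of_lt (show n - j < k - j by omega)]
  lift j to ℕ using hj
  lift k to ℕ using by omega
  lift n to ℕ using by omega
  have hjk' : j ≤ k := by exact_mod_cast hjk
  have hkn' : k ≤ n := by exact_mod_cast hkn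
  rw [← Nat.cast_sub (hjk'.trans hkn'), ← Nat.cast_sub hjk']
  simp only [intChoose_natCast]
  exact Nat.choose_mul hjk'

lemma card_filter_Icc_card_eq {α : Type*} [DecidableEq α] {X Y : Finset α} (h : Y ⊆ X) (m : ℕ) :
    #{Z ∈ Icc Y X | #Z = m} = intChoose (#X - #Y) (m - #Y) := by
  rcases lt_or_ge m #Y with hm | hm
  · rw [intChoose_of_neg_right (by omega), card_eq_zero, filter_eq_empty_iff]
    intro Z hZ hZm
    have := card_le_card (mem_Icc.mp hZ).1
    omega
  have hsub : #{Z ∈ Icc Y X | #Z = m} = #(powersetCard (m - #Y) (X \ Y)) := by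
    refine card_nbij' (· \ Y) (· ∪ Y) ?_ ?_ ?_ ?_
    · intro Z hZ
      simp only [mem_coe, mem_filter, mem_Icc] at hZ
      simp [mem_powersetCard, sdiff_subset_sdiff hZ.1.2 le_rfl, card_sdiff_of_subset hZ.1.1, hZ.2]
    · intro W hW
      simp only [mem_coe, mem_powersetCard, subset_sdiff] at hW
      simp only [mem_coe, mem_filter, mem_Icc]
      refine ⟨⟨subset_union_right, union_subset hW.1.1 h⟩, ?_⟩
      rw [card_union_of_disjoint hW.1.2, hW.2]
      omega
    · intro Z hZ
      simp only [mem_coe, mem_filter, mem_Icc] at hZ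
      exact sdiff_union_of_subset hZ.1.1
    · intro W hW
      simp only [mem_coe, mem_powersetCard, subset_sdiff] at hW
      exact union_sdiff_cancel_right hW.1.2
  rw [hsub, card_powersetCard, card_sdiff_of_subset h, ← Nat.cast_sub (card_le_card h),
    ← Nat.cast_sub hm, intChoose_natCast]

lemma finite_setOf_forall_subset_and_eq_empty {α : Type*} (X : Finset α) (N : ℕ) :
    {T : ℕ → Finset α | ∀ i, T i ⊆ X ∧ (N < i → T i = ∅)}.Finite := by
  refine Set.Finite.of_injOn (f := fun T (i : Fin (N + 1)) => T i)
    (t := Set.univ.pi fun _ => ↑X.powerset) ?_ ?_ (Set.Finite.pi fun _ => X.powerset.finite_toSet)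
  · intro T hT
    simp [fun i => (hT i).1]
  · intro T hT T' hT' h
    funext i
    rcases le_or_gt i N with hi | hi
    · exact congrFun h ⟨i, Nat.lt_succ_of_le hi⟩
    · rw [(hT i).2 hi, (hT' i).2 hi]

lemma subset_of_forall_succ_subset {α : Type*} {T : ℕ → Finset α} {r s : ℕ}
    (h : ∀ k, r ≤ k → k < s → T (k + 1) ⊆ T k) {i j : ℕ} (hri : r ≤ i) (hij : i ≤ j)
    (hjs : j ≤ s) : T j ⊆ T i := by
  induction j, hij using Nat.le_induction with
  | base => exact subset_rfl
  | succ j hij ih => exact (h j (by omega) (by omega)).trans (ih (by omega))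

section Chains

variable {e : ℕ → ℕ} {r m s : ℕ} {X Y Z W : Finset ℕ}

lemma finite_setOf_chain (e : ℕ → ℕ) (r s : ℕ) (X Y : Finset ℕ) :
    {T : ℕ → Finset ℕ | (∀ i, i < r ∨ s < i → T i = ∅) ∧ T r = X ∧ T s = Y ∧
      (∀ k, r ≤ k → k < s → T (k + 1) ⊆ T k) ∧ ∀ k, r ≤ k → k ≤ s → #(T k) = e k}.Finite := by
  refine (finite_setOf_forall_subset_and_eq_empty X s).subset ?_
  rintro T ⟨hT, hr, -, hstep, -⟩
  refine fun i => ⟨?_, fun hi => hT i (.inr hi)⟩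
  by_cases hi : r ≤ i ∧ i ≤ s
  · exact hr ▸ subset_of_forall_succ_subset hstep le_rfl hi.1 hi.2
  · simp [hT i (by omega)]

/-- Chains `X = T r ⊇ T (r + 1) ⊇ ⋯ ⊇ T s = Y` with `#(T k) = e k`, extended by `∅`
outside `[r, s]`. -/
noncomputable def chains (e : ℕ → ℕ) (r s : ℕ) (X Y : Finset ℕ) : Finset (ℕ → Finset ℕ) :=
  (finite_setOf_chain e r s X Y).toFinset

lemma mem_chains {T : ℕ → Finset ℕ} :
    T ∈ chains e r s X Y ↔ (∀ i, i < r ∨ s < i → T i = ∅) ∧ T r = X ∧ T s = Y ∧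
      (∀ k, r ≤ k → k < s → T (k + 1) ⊆ T k) ∧ ∀ k, r ≤ k → k ≤ s → #(T k) = e k := by
  simp [chains]

lemma card_chains_self (hX : #X = e r) : #(chains e r r X X) = 1 := by
  rw [card_eq_one]
  refine ⟨fun i => if i = r then X else ∅, ext fun T => ?_⟩
  rw [mem_chains, mem_singleton]
  constructor
  · rintro ⟨hT, hr, -⟩
    funext i
    split_ifs with hi
    · rw [hi, hr]
    · exact hT i (by omega)
  · rintro rfl
    refine ⟨fun i hi => if_neg (by omega), if_pos rfl, if_pos rfl, fun k _ _ => by omega, ?_⟩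
    intro k hk hk'
    simp [show k = r by omega, hX]

lemma ite_mem_chains {U V : ℕ → Finset ℕ} (hrm : r ≤ m) (hms : m < s) (hZY : Z ⊆ Y)
    (hU : U ∈ chains e r m X Y) (hV : V ∈ chains e (m + 1) s Z W) :
    (fun i => if i ≤ m then U i else V i) ∈ chains e r s X W := by
  obtain ⟨hU0, hUr, hUm, hUstep, hUcard⟩ := mem_chains.mp hU
  obtain ⟨hV0, hVm, hVs, hVstep, hVcard⟩ := mem_chains.mp hV
  refine mem_chains.mpr ⟨fun i hi => ?_, by simp [hrm, hUr], by simp [hms.not_ge, hVs],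
    fun k hk hk' => ?_, fun k hk hk' => ?_⟩
  · split_ifs
    exacts [hU0 i (by omega), hV0 i (by omega)]
  · rcases lt_trichotomy k m with hkm | rfl | hkm
    · simpa [show k ≤ m by omega, show k + 1 ≤ m by omega] using hUstep k hk hkm
    · simpa [hVm, hUm] using hZY
    · simpa [show ¬k ≤ m by omega, show ¬k + 1 ≤ m by omega] using hVstep k hkm hk'
  · split_ifs with hkm
    exacts [hUcard k hk hkm, hVcard k (by omega) hk']

lemma card_filter_chains_apply_eq (hrm : r ≤ m) (hms : m < s) (hZY : Z ⊆ Y) :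
    #{T ∈ chains e r s X W | T m = Y ∧ T (m + 1) = Z} =
      #(chains e r m X Y) * #(chains e (m + 1) s Z W) := by
  rw [← card_product]
  refine card_nbij'
    (fun T => (fun i => if i ≤ m then T i else ∅, fun i => if i ≤ m then ∅ else T i))
    (fun x i => if i ≤ m then x.1 i else x.2 i) ?_ ?_ ?_ ?_
  · intro T hT
    simp only [mem_coe, mem_filter, mem_chains, mem_product] at hT ⊢
    obtain ⟨⟨hT0, hTr, hTs, hstep, hcard⟩, hTm, hTm'⟩ := hT
    refine ⟨⟨fun i hi => ?_, by simp [hrm, hTr], by simp [hTm], fun k hk hk' => ?_,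
      fun k hk hk' => ?_⟩, ⟨fun i hi => ?_, by simp [hTm'], by simp [hms.not_ge, hTs],
      fun k hk hk' => ?_, fun k hk hk' => ?_⟩⟩
    · split_ifs
      exacts [hT0 i (by omega), rfl]
    · simpa [show k ≤ m by omega, show k + 1 ≤ m by omega] using hstep k hk (by omega)
    · simpa [hk'] using hcard k hk (by omega)
    · split_ifs
      exacts [rfl, hT0 i (by omega)]
    · simpa [show ¬k ≤ m by omega, show ¬k + 1 ≤ m by omega] using hstep k (by omega) hk'
    · simpa [show ¬k ≤ m by omega] using hcard k (by omega) hk'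
  · rintro ⟨U, V⟩ hUV
    rw [mem_coe, mem_product] at hUV
    simp only [mem_coe, mem_filter]
    refine ⟨ite_mem_chains hrm hms hZY hUV.1 hUV.2, ?_, ?_⟩
    · simpa using (mem_chains.mp hUV.1).2.2.1
    · simpa using (mem_chains.mp hUV.2).2.1
  · intro T _
    funext i
    dsimp only
    split_ifs <;> rfl
  · rintro ⟨U, V⟩ hUV
    simp only [mem_coe, mem_product, mem_chains] at hUV
    refine Prod.ext (funext fun i => ?_) (funext fun i => ?_) <;> dsimp only <;> split_ifs
    exacts [rfl, (hUV.1.1 i (by omega)).symm, (hUV.2.1 i (by omega)).symm, rfl]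

lemma chiE_eq_intChoose_mul (hr : 1 ≤ r) (hrs : r < s) (he : e s ≤ e r) :
    chiE e r s = intChoose (e r - e s) (e (r + 1) - e s) * chiE e (r + 1) s := by
  obtain hrs' | rfl := Nat.lt_or_eq_of_le (Nat.succ_le_of_lt hrs)
  · rw [chiE, ← Finset.insert_Icc_add_one_left_eq_Icc (by omega),
      prod_insert (by simp), chiE]
  · rw [chiE, chiE, Icc_eq_empty (by omega), Icc_eq_empty (by omega), sub_self,
      intChoose_zero_right (by omega), one_mul]

lemma card_chains (hr : 1 ≤ r) (hrs : r ≤ s) (hYX : Y ⊆ X) (hX : #X = e r) (hY : #Y = e s) :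
    #(chains e r s X Y) = chiE e r s := by
  obtain ⟨d, rfl⟩ := Nat.exists_eq_add_of_le hrs
  induction d generalizing r X with
  | zero =>
    obtain rfl : Y = X := eq_of_subset_of_card_le hYX (by simp_all)
    rw [Nat.add_zero, card_chains_self hX, chiE, Icc_eq_empty (by omega), prod_empty]
  | succ d ih =>
    have hmaps : Set.MapsTo (fun T : ℕ → Finset ℕ => T (r + 1)) (chains e r (r + (d + 1)) X Y)
        ({Z ∈ Icc Y X | #Z = e (r + 1)} : Finset (Finset ℕ)) := by
      intro T hT
      obtain ⟨-, hTr, hTs, hstep, hcard⟩ := mem_chains.mp hT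
      simp only [coe_filter, mem_Icc, Set.mem_ofPred_eq]
      exact ⟨⟨hTs ▸ subset_of_forall_succ_subset hstep (by omega) (by omega) le_rfl,
        hTr ▸ hstep r le_rfl (by omega)⟩, hcard (r + 1) (by omega) (by omega)⟩
    have hfiber : ∀ Z ∈ {Z ∈ Icc Y X | #Z = e (r + 1)},
        #{T ∈ chains e r (r + (d + 1)) X Y | T (r + 1) = Z} = chiE e (r + 1) (r + (d + 1)) := by
      intro Z hZ
      simp only [mem_filter, mem_Icc] at hZ
      have hfilter : {T ∈ chains e r (r + (d + 1)) X Y | T (r + 1) = Z} =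
          {T ∈ chains e r (r + (d + 1)) X Y | T r = X ∧ T (r + 1) = Z} :=
        filter_congr fun T hT => by simp [(mem_chains.mp hT).2.1]
      have := ih (by omega) hZ.1.1 hZ.2 (by omega) (by rwa [Nat.add_right_comm])
      rw [show r + 1 + d = r + (d + 1) by omega] at this
      rw [hfilter, card_filter_chains_apply_eq le_rfl (by omega) hZ.1.2, card_chains_self hX,
        one_mul, this]
    have he : e (r + (d + 1)) ≤ e r := hX ▸ hY ▸ card_le_card hYX
    rw [card_eq_sum_card_fiberwise hmaps, sum_congr rfl hfiber, sum_const, smul_eq_mul,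
      card_filter_Icc_card_eq hYX, hX, hY, chiE_eq_intChoose_mul hr (by omega) he]

lemma card_filter_chains_apply_succ_eq (hr : 1 ≤ r) (hrm : r ≤ m) (hms : m < s) (hWZ : W ⊆ Z)
    (hZX : Z ⊆ X) (hX : #X = e r) (hZ : #Z = e (m + 1)) (hW : #W = e s) :
    #{T ∈ chains e r s X W | T (m + 1) = Z} =
      intChoose (e r - e (m + 1)) (e m - e (m + 1)) * (chiE e r m * chiE e (m + 1) s) := by
  have hmaps : Set.MapsTo (fun T : ℕ → Finset ℕ => T m)
      ({T ∈ chains e r s X W | T (m + 1) = Z} : Finset (ℕ → Finset ℕ))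
      ({Y ∈ Icc Z X | #Y = e m} : Finset (Finset ℕ)) := by
    intro T hT
    simp only [coe_filter, mem_chains, Set.mem_ofPred_eq] at hT
    obtain ⟨⟨-, hTr, -, hstep, hcard⟩, hTZ⟩ := hT
    simp only [coe_filter, mem_Icc, Set.mem_ofPred_eq]
    exact ⟨⟨hTZ ▸ hstep m hrm hms, hTr ▸ subset_of_forall_succ_subset hstep le_rfl hrm hms.le⟩,
      hcard m hrm hms.le⟩
  have hfiber : ∀ Y ∈ {Y ∈ Icc Z X | #Y = e m},
      #{T ∈ {T ∈ chains e r s X W | T (m + 1) = Z} | T m = Y} = chiE e r m * chiE e (m + 1) s := by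
    intro Y hY
    simp only [mem_filter, mem_Icc] at hY
    rw [filter_filter, filter_congr fun _ _ => and_comm, card_filter_chains_apply_eq hrm hms hY.1.1,
      card_chains hr hrm hY.1.2 hX hY.2, card_chains (by omega) hms hWZ hZ hW]
  rw [card_eq_sum_card_fiberwise hmaps, sum_congr rfl hfiber, sum_const, smul_eq_mul,
    card_filter_Icc_card_eq hZX, hX, hZ]

end Chains

section ShiftPairs

def shiftPairs (M a d : ℕ) : Finset (Finset ℕ × Finset ℕ) :=
  {q ∈ powersetCard a (Icc 1 M) ×ˢ powersetCard d (Icc 1 M) | q.2 ⊆ q.1 ∧ ∀ x ∈ q.2, x + 1 ∈ q.1}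

variable {M a d : ℕ} {q : Finset ℕ × Finset ℕ}

lemma mem_shiftPairs : q ∈ shiftPairs M a d ↔
    q.1 ⊆ Icc 1 M ∧ #q.1 = a ∧ #q.2 = d ∧ q.2 ⊆ q.1 ∧ ∀ x ∈ q.2, x + 1 ∈ q.1 := by
  simp only [shiftPairs, mem_filter, mem_product, mem_powersetCard]
  exact ⟨fun h => ⟨h.1.1.1, h.1.1.2, h.1.2.2, h.2⟩,
    fun h => ⟨⟨⟨h.1, h.2.1⟩, h.2.2.2.1.trans h.1, h.2.2.1⟩, h.2.2.2⟩⟩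

lemma card_shiftPairs_zero_left : #(shiftPairs M 0 d) = if d = 0 then 1 else 0 := by
  have h : shiftPairs M 0 d = if d = 0 then {(∅, ∅)} else ∅ := by
    ext ⟨A, D⟩
    simp only [mem_shiftPairs, card_eq_zero]
    split_ifs with hd <;> simp only [mem_singleton, Prod.mk.injEq, notMem_empty, iff_false]
    · constructor
      · rintro ⟨-, rfl, hD, -⟩
        exact ⟨rfl, card_eq_zero.mp (hd ▸ hD)⟩
      · rintro ⟨rfl, rfl⟩
        simp [hd]
    · rintro ⟨-, rfl, hD, hDA, -⟩
      exact hd (hD ▸ by simp [subset_empty.mp hDA])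
  rw [h]
  split_ifs <;> rfl

lemma filter_notMem_shiftPairs_succ :
    {q ∈ shiftPairs (M + 1) a d | M + 1 ∉ q.1} = shiftPairs M a d := by
  ext ⟨A, D⟩
  simp only [mem_filter, mem_shiftPairs]
  constructor
  · rintro ⟨⟨hA, hAa, hDd, hDA, hshift⟩, hM⟩
    refine ⟨fun x hx => ?_, hAa, hDd, hDA, hshift⟩
    have := mem_Icc.mp (hA hx)
    exact mem_Icc.mpr ⟨this.1, by grind⟩
  · rintro ⟨hA, hAa, hDd, hDA, hshift⟩
    refine ⟨⟨hA.trans (Icc_subset_Icc_right (by omega)), hAa, hDd, hDA, hshift⟩, fun hM => ?_⟩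
    have := mem_Icc.mp (hA hM)
    omega

lemma card_filter_notMem_shiftPairs_succ :
    #{q ∈ shiftPairs (M + 1) (a + 1) d | M + 1 ∈ q.1 ∧ M ∉ q.2} = #(shiftPairs M a d) := by
  refine card_nbij' (fun q => (q.1.erase (M + 1), q.2)) (fun q => (insert (M + 1) q.1, q.2))
    ?_ ?_ ?_ ?_
  · rintro ⟨A, D⟩ h
    simp only [mem_coe, mem_filter, mem_shiftPairs, subset_iff, mem_Icc] at h ⊢
    grind [card_erase_of_mem]
  · rintro ⟨A, D⟩ h
    simp only [mem_coe, mem_filter, mem_shiftPairs, subset_iff, mem_Icc] at h ⊢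
    grind [card_insert_of_notMem]
  · rintro ⟨A, D⟩ h
    simp only [mem_coe, mem_filter] at h
    simp [insert_erase h.2.1]
  · rintro ⟨A, D⟩ h
    simp only [mem_coe, mem_shiftPairs, subset_iff, mem_Icc] at h
    simp [erase_insert (show M + 1 ∉ A by grind)]

lemma card_filter_mem_shiftPairs_succ :
    #{q ∈ shiftPairs (M + 1) (a + 1) (d + 1) | M + 1 ∈ q.1 ∧ M ∈ q.2} =
      #{q ∈ shiftPairs M a d | M ∈ q.1} := by
  refine card_nbij' (fun q => (q.1.erase (M + 1), q.2.erase M))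
    (fun q => (insert (M + 1) q.1, insert M q.2)) ?_ ?_ ?_ ?_
  · rintro ⟨A, D⟩ h
    simp only [mem_coe, mem_filter, mem_shiftPairs, subset_iff, mem_Icc] at h ⊢
    grind [card_erase_of_mem]
  · rintro ⟨A, D⟩ h
    simp only [mem_coe, mem_filter, mem_shiftPairs, subset_iff, mem_Icc] at h ⊢
    grind [card_insert_of_notMem]
  · rintro ⟨A, D⟩ h
    simp only [mem_coe, mem_filter] at h
    simp [insert_erase h.2.1, insert_erase h.2.2]
  · rintro ⟨A, D⟩ h
    simp only [mem_coe, mem_filter, mem_shiftPairs, subset_iff, mem_Icc] at h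
    simp [erase_insert (show M + 1 ∉ A by grind), erase_insert (show M ∉ D by grind)]

lemma card_filter_mem_shiftPairs_succ_zero :
    #{q ∈ shiftPairs (M + 1) (a + 1) 0 | M + 1 ∈ q.1} = #(shiftPairs M a 0) := by
  rw [← card_filter_notMem_shiftPairs_succ]
  congr 1
  refine filter_congr fun q hq => ?_
  simp [card_eq_zero.mp (mem_shiftPairs.mp hq).2.2.1]

lemma card_filter_mem_shiftPairs_succ_succ :
    #{q ∈ shiftPairs (M + 1) (a + 1) (d + 1) | M + 1 ∈ q.1} =
      #(shiftPairs M a (d + 1)) + #{q ∈ shiftPairs M a d | M ∈ q.1} := by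
  rw [← card_filter_notMem_shiftPairs_succ (M := M), ← card_filter_mem_shiftPairs_succ (M := M),
    ← card_filter_add_card_filter_not (fun q : Finset ℕ × Finset ℕ => M ∈ q.2), filter_filter,
    filter_filter, add_comm]

lemma card_shiftPairs_succ :
    #(shiftPairs (M + 1) a d) =
      #(shiftPairs M a d) + #{q ∈ shiftPairs (M + 1) a d | M + 1 ∈ q.1} := by
  rw [← filter_notMem_shiftPairs_succ (M := M)]
  exact (card_filter_add_card_filter_not _).symm.trans (Nat.add_comm _ _)

end ShiftPairs

lemma card_filter_mem_shiftPairs_succ_eq {M : ℕ}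
    (hSP : ∀ a d, 1 ≤ a →
      #(shiftPairs M a d) = intChoose (a - 1 : ℤ) d * intChoose (M - d : ℤ) (a - d : ℤ))
    (hRS : ∀ a d, #{q ∈ shiftPairs M a d | M ∈ q.1} =
      intChoose (a - 1 : ℤ) d * intChoose (M - 1 - d : ℤ) (a - 1 - d : ℤ)) (a d : ℕ) :
    #{q ∈ shiftPairs (M + 1) a d | M + 1 ∈ q.1} =
      intChoose (a - 1 : ℤ) d * intChoose (M - d : ℤ) (a - 1 - d : ℤ) := by
  rcases a with _ | a
  · rw [intChoose_of_neg_left (by omega), zero_mul, card_eq_zero, filter_eq_empty_iff]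
    intro q hq hM
    simp [card_eq_zero.mp (mem_shiftPairs.mp hq).2.1] at hM
  push_cast
  rcases d with _ | d
  · rw [card_filter_mem_shiftPairs_succ_zero]
    rcases a with _ | a
    · simp [card_shiftPairs_zero_left, intChoose_zero_right]
    · rw [hSP (a + 1) 0 (by omega)]
      simp [intChoose_zero_right (Int.natCast_nonneg a),
        intChoose_zero_right (show (0 : ℤ) ≤ a + 1 by positivity)]
  · rw [card_filter_mem_shiftPairs_succ_succ, hRS a d]
    rcases a with _ | a
    · simp [card_shiftPairs_zero_left, intChoose_of_neg_left, intChoose_of_lt]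
    · rw [hSP (a + 1) (d + 1) (by omega)]
      push_cast
      rw [show (a + 1 + 1 - 1 : ℤ) = a + 1 by ring, intChoose_succ_left (by positivity)]
      ring_nf

theorem card_shiftPairs_and_card_filter_mem (M : ℕ) :
    (∀ a d, 1 ≤ a →
      #(shiftPairs M a d) = intChoose (a - 1 : ℤ) d * intChoose (M - d : ℤ) (a - d : ℤ)) ∧
    ∀ a d, #{q ∈ shiftPairs M a d | M ∈ q.1} =
      intChoose (a - 1 : ℤ) d * intChoose (M - 1 - d : ℤ) (a - 1 - d : ℤ) := by
  induction M with
  | zero =>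
    refine ⟨fun a d ha => ?_, fun a d => ?_⟩
    · rw [intChoose_of_lt (b := (a - d : ℤ)) (by omega), mul_zero, card_eq_zero,
        eq_empty_iff_forall_notMem]
      intro q hq
      obtain ⟨hA, hAa, -⟩ := mem_shiftPairs.mp hq
      simp [subset_empty.mp hA] at hAa
      omega
    · rw [intChoose_of_neg_left (a := ((0 : ℕ) - 1 - d : ℤ)) (by omega), mul_zero, card_eq_zero,
        filter_eq_empty_iff]
      intro q hq h0
      simpa using (mem_shiftPairs.mp hq).1 h0
  | succ M ih =>
    have hRS := card_filter_mem_shiftPairs_succ_eq ih.1 ih.2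
    refine ⟨fun a d ha => ?_, fun a d => by rw [hRS]; push_cast; ring_nf⟩
    rw [card_shiftPairs_succ, ih.1 a d ha, hRS, ← mul_add]
    push_cast
    rcases le_or_gt d M with hdM | hMd
    · rw [show (M + 1 - d : ℤ) = M - d + 1 by ring, intChoose_succ_left (by omega)]
      ring_nf
    · simp only [intChoose_of_neg_left (show (M - d : ℤ) < 0 by omega), add_zero, mul_zero]
      rcases le_or_gt d (a - 1) with hda | hda
      · rw [intChoose_of_lt (a := (M + 1 - d : ℤ)) (by omega), mul_zero]
      · rw [intChoose_of_lt (a := (a - 1 : ℤ)) (by omega), zero_mul]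

section ShiftTriples

def shiftTriples (n a c d : ℕ) : Finset (Finset ℕ × Finset ℕ × Finset ℕ) :=
  {x ∈ powersetCard a (Icc 1 (n + 1)) ×ˢ powersetCard c (Icc 1 n) ×ˢ powersetCard d (Icc 1 n) |
    x.2.2 ⊆ x.2.1 ∧ x.2.1 ⊆ x.1 ∧ ∀ y ∈ x.2.2, y + 1 ∈ x.1}

variable {n a c d : ℕ} {x : Finset ℕ × Finset ℕ × Finset ℕ}

lemma mem_shiftTriples : x ∈ shiftTriples n a c d ↔
    x.1 ⊆ Icc 1 (n + 1) ∧ x.2.1 ⊆ Icc 1 n ∧ #x.1 = a ∧ #x.2.1 = c ∧ #x.2.2 = d ∧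
      x.2.2 ⊆ x.2.1 ∧ x.2.1 ⊆ x.1 ∧ ∀ y ∈ x.2.2, y + 1 ∈ x.1 := by
  simp only [shiftTriples, mem_filter, mem_product, mem_powersetCard]
  exact ⟨fun h => ⟨h.1.1.1, h.1.2.1.1, h.1.1.2, h.1.2.1.2, h.1.2.2.2, h.2⟩,
    fun h => ⟨⟨⟨h.1, h.2.2.1⟩, ⟨h.2.1, h.2.2.2.1⟩, h.2.2.2.2.2.1.trans h.2.1, h.2.2.2.2.1⟩,
      h.2.2.2.2.2⟩⟩

lemma card_filter_shiftTriples_eq {A D : Finset ℕ} (hq : (A, D) ∈ shiftPairs (n + 1) a d) :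
    #{x ∈ shiftTriples n a c d | (x.1, x.2.2) = (A, D)} =
      intChoose (#(A.erase (n + 1)) - d : ℤ) (c - d : ℤ) := by
  obtain ⟨hA, hAa, hDd, hDA, hshift⟩ := mem_shiftPairs.mp hq
  have hD : D ⊆ A.erase (n + 1) := fun y hy => by grind
  rw [← hDd, ← card_filter_Icc_card_eq hD]
  refine card_nbij' (fun x => x.2.1) (fun C => (A, C, D)) ?_ ?_ ?_ ?_
  · rintro ⟨A', C, D'⟩ hx
    simp only [mem_coe, mem_filter, mem_shiftTriples, Prod.mk.injEq, subset_iff, mem_Icc] at hx ⊢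
    grind
  · intro C hC
    simp only [mem_coe, mem_filter, mem_shiftTriples, mem_Icc, subset_iff] at hC hA ⊢
    grind
  · rintro ⟨A', C, D'⟩ hx
    simp only [mem_coe, mem_filter, Prod.mk.injEq] at hx
    simp [hx.2.1, hx.2.2]
  · intro C _
    rfl

lemma intChoose_mul_add_intChoose_mul (n a c d : ℤ) :
    intChoose (n - d) (a - 1 - d) * intChoose (a - 1 - d) (c - d) +
      intChoose (n - d) (a - d) * intChoose (a - d) (c - d) =
    intChoose (n + 1 - c) (a - c) * intChoose (n - d) (c - d) := by
  rw [intChoose_mul_intChoose (n - d), intChoose_mul_intChoose (n - d), ← mul_add,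
    show n - d - (c - d) = n - c by ring, show a - 1 - d - (c - d) = a - c - 1 by ring,
    show a - d - (c - d) = a - c by ring]
  rcases le_or_gt c n with hcn | hnc
  · rw [show n + 1 - c = n - c + 1 by ring, intChoose_succ_left (by omega), mul_comm]
  · rw [intChoose_of_lt (show n - d < c - d by omega), zero_mul, mul_zero]

theorem card_shiftTriples (ha : 1 ≤ a) :
    #(shiftTriples n a c d) = intChoose (a - 1 : ℤ) d * intChoose (n + 1 - c : ℤ) (a - c : ℤ) *
      intChoose (n - d : ℤ) (c - d : ℤ) := by
  have hmaps : Set.MapsTo (fun x : Finset ℕ × Finset ℕ × Finset ℕ => (x.1, x.2.2))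
      (shiftTriples n a c d) (shiftPairs (n + 1) a d) := by
    rintro ⟨A, C, D⟩ hx
    simp only [mem_coe, mem_shiftTriples, mem_shiftPairs] at hx ⊢
    exact ⟨hx.1, hx.2.2.1, hx.2.2.2.2.1, hx.2.2.2.2.2.1.trans hx.2.2.2.2.2.2.1,
      hx.2.2.2.2.2.2.2⟩
  have htop : ∀ q ∈ {q ∈ shiftPairs (n + 1) a d | n + 1 ∈ q.1},
      intChoose (#(q.1.erase (n + 1)) - d : ℤ) (c - d : ℤ) = intChoose (a - 1 - d : ℤ) (c - d) := by
    intro q hq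
    rw [mem_filter, mem_shiftPairs] at hq
    rw [card_erase_of_mem hq.2, hq.1.2.1, Nat.cast_sub (by omega), Nat.cast_one]
  have hbelow : ∀ q ∈ shiftPairs n a d,
      intChoose (#(q.1.erase (n + 1)) - d : ℤ) (c - d : ℤ) = intChoose (a - d : ℤ) (c - d) := by
    intro q hq
    rw [← filter_notMem_shiftPairs_succ, mem_filter, mem_shiftPairs] at hq
    rw [erase_eq_of_notMem hq.2, hq.1.2.1]
  rw [card_eq_sum_card_fiberwise hmaps, sum_congr rfl fun q hq => card_filter_shiftTriples_eq hq,
    ← sum_filter_add_sum_filter_not _ (fun q => n + 1 ∈ q.1), filter_notMem_shiftPairs_succ,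
    sum_congr rfl htop, sum_congr rfl hbelow, sum_const, sum_const, smul_eq_mul, smul_eq_mul,
    (card_shiftPairs_and_card_filter_mem (n + 1)).2,
    (card_shiftPairs_and_card_filter_mem n).1 a d ha]
  push_cast
  rw [add_sub_cancel_right, mul_assoc, mul_assoc, ← mul_add, intChoose_mul_add_intChoose_mul,
    mul_assoc]

end ShiftTriples

section CoordSubreps

def coordSubreps (p t n : ℕ) (e : ℕ → ℕ) : Set (ℕ → Finset ℕ) :=
  {T : ℕ → Finset ℕ |
    (∀ i, 1 ≤ i → i ≤ t → T i ⊆ Finset.Icc 1 (n + 1)) ∧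
    (∀ i, t + 1 ≤ i → i ≤ p + 1 → T i ⊆ Finset.Icc 1 n) ∧
    (∀ i, 1 ≤ i → i ≤ p + 1 → (T i).card = e i) ∧
    (∀ k, 1 ≤ k → k ≤ p → T (k + 1) ⊆ T k) ∧
    (∀ m ∈ T (p + 1), m + 1 ∈ T 1) ∧
    (∀ i, i < 1 ∨ p + 1 < i → T i = ∅)}

variable {p t n : ℕ} {e : ℕ → ℕ}

lemma finite_coordSubreps : (coordSubreps p t n e).Finite := by
  refine (finite_setOf_forall_subset_and_eq_empty (Icc 1 (n + 1)) (p + 1)).subset ?_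
  rintro T ⟨h1, h2, -, -, -, h0⟩
  refine fun i => ⟨?_, fun hi => h0 i (.inr hi)⟩
  rcases lt_or_ge i 1 with hi | hi
  · simp [h0 i (.inl hi)]
  rcases le_or_gt i t with hit | hit
  · exact h1 i hi hit
  rcases le_or_gt i (p + 1) with hip | hip
  · exact (h2 i hit hip).trans (Icc_subset_Icc_right (by omega))
  · simp [h0 i (.inr hip)]

lemma filter_coordSubreps_eq (htp : t ≤ p) {A C D : Finset ℕ}
    (hg : (A, C, D) ∈ shiftTriples n (e 1) (e (t + 1)) (e (p + 1))) :
    {T ∈ (finite_coordSubreps (p := p) (t := t) (n := n) (e := e)).toFinset |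
      (T 1, T (t + 1), T (p + 1)) = (A, C, D)} = {T ∈ chains e 1 (p + 1) A D | T (t + 1) = C} := by
  obtain ⟨hA, hC, -, -, -, -, -, hshift⟩ := mem_shiftTriples.mp hg
  ext T
  simp only [mem_filter, Set.Finite.mem_toFinset, Prod.mk.injEq, mem_chains]
  constructor
  · rintro ⟨⟨-, -, hcard, hstep, -, h0⟩, rfl, rfl, rfl⟩
    exact ⟨⟨h0, rfl, rfl, fun k hk hkp => hstep k hk (by omega), hcard⟩, rfl⟩
  · rintro ⟨⟨h0, rfl, rfl, hstep, hcard⟩, rfl⟩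
    refine ⟨⟨fun i hi hit => ?_, fun i hi hip => ?_, hcard, fun k hk hkp => hstep k hk (by omega),
      hshift, h0⟩, rfl, rfl, rfl⟩
    · exact (subset_of_forall_succ_subset hstep le_rfl hi (by omega)).trans hA
    · exact (subset_of_forall_succ_subset hstep (by omega) hi hip).trans hC

lemma ncard_coordSubreps (ht1 : 1 ≤ t) (htp : t ≤ p) :
    (coordSubreps p t n e).ncard = #(shiftTriples n (e 1) (e (t + 1)) (e (p + 1))) *
      (intChoose (e 1 - e (t + 1) : ℤ) (e t - e (t + 1) : ℤ) *
        (chiE e 1 t * chiE e (t + 1) (p + 1))) := by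
  have hmaps : Set.MapsTo (fun T : ℕ → Finset ℕ => (T 1, T (t + 1), T (p + 1)))
      (finite_coordSubreps (p := p) (t := t) (n := n) (e := e)).toFinset
      (shiftTriples n (e 1) (e (t + 1)) (e (p + 1))) := by
    intro T hT
    obtain ⟨h1, h2, hcard, hstep, hshift, -⟩ := (Set.Finite.mem_toFinset _).mp hT
    have hstep' : ∀ k, 1 ≤ k → k < p + 1 → T (k + 1) ⊆ T k := fun k hk hkp => hstep k hk (by omega)
    exact mem_shiftTriples.mpr ⟨h1 1 le_rfl ht1, h2 (t + 1) le_rfl (by omega),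
      hcard 1 le_rfl (by omega), hcard (t + 1) (by omega) (by omega),
      hcard (p + 1) (by omega) le_rfl,
      subset_of_forall_succ_subset hstep' (by omega) (by omega) le_rfl,
      subset_of_forall_succ_subset hstep' le_rfl (by omega) (by omega), hshift⟩
  rw [Set.ncard_eq_toFinset_card _ finite_coordSubreps, card_eq_sum_card_fiberwise hmaps]
  refine sum_const_nat fun g hg => ?_
  obtain ⟨A, C, D⟩ := g
  obtain ⟨-, -, hA, hC, hD, hDC, hCA, -⟩ := mem_shiftTriples.mp hg
  rw [filter_coordSubreps_eq htp hg,
    card_filter_chains_apply_succ_eq le_rfl ht1 (by omega) hDC hCA hA hC hD]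

end CoordSubreps

theorem card_coordinate_subreps_preprojective_Ap1_general (p t n : ℕ)
    (ht1 : 1 ≤ t) (htp : t ≤ p) (e : ℕ → ℕ) (he : 1 ≤ e 1) :
    Set.ncard {T : ℕ → Finset ℕ |
        (∀ i, 1 ≤ i → i ≤ t → T i ⊆ Finset.Icc 1 (n + 1)) ∧
        (∀ i, t + 1 ≤ i → i ≤ p + 1 → T i ⊆ Finset.Icc 1 n) ∧
        (∀ i, 1 ≤ i → i ≤ p + 1 → (T i).card = e i) ∧
        (∀ k, 1 ≤ k → k ≤ p → T (k + 1) ⊆ T k) ∧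
        (∀ m ∈ T (p + 1), m + 1 ∈ T 1) ∧
        (∀ i, i < 1 ∨ p + 1 < i → T i = ∅)}
      = intChoose ((e 1 : ℤ) - 1) (e (p + 1) : ℤ) *
        intChoose ((n : ℤ) + 1 - e t) ((e 1 : ℤ) - e t) *
        intChoose ((n : ℤ) + 1 - e (t + 1)) ((e t : ℤ) - e (t + 1)) *
        intChoose ((n : ℤ) - e (p + 1)) ((e (t + 1) : ℤ) - e (p + 1)) *
        chiE e 1 t * chiE e (t + 1) (p + 1) := by
  change (coordSubreps p t n e).ncard = _
  rw [ncard_coordSubreps ht1 htp, card_shiftTriples he]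
  have hchoose := intChoose_mul_intChoose ((n : ℤ) + 1 - e (t + 1)) ((e 1 : ℤ) - e (t + 1))
    ((e t : ℤ) - e (t + 1))
  rw [show (n + 1 - e (t + 1) - (e t - e (t + 1)) : ℤ) = n + 1 - e t by ring,
    show (e 1 - e (t + 1) - (e t - e (t + 1)) : ℤ) = e 1 - e t by ring] at hchoose
  linear_combination (intChoose ((e 1 : ℤ) - 1) (e (p + 1) : ℤ) *
    intChoose ((n : ℤ) - e (p + 1)) ((e (t + 1) : ℤ) - e (p + 1)) *
    (chiE e 1 t * chiE e (t + 1) (p + 1))) * hchoose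

/-- Counting coordinate subrepresentations of the preprojective representation
`M_p^n(overline[1,t])` of the quiver of type `Ã_{p,1}`: the number of tuples
`(T_1, …, T_{p+1})` with `T_1, …, T_t ⊆ [1,n+1]`, `T_{t+1}, …, T_{p+1} ⊆ [1,n]`,
`|T_i| = e_i`, `T_{k+1} ⊆ T_k` for `1 ≤ k ≤ p`, and `{k+1 : k ∈ T_{p+1}} ⊆ T_1`
(encoded as functions `ℕ → Finset ℕ` vanishing outside `[1,p+1]`) equals
`C(e_1−1, e_{p+1}) · C(n+1−e_t, e_1−e_t) · C(n+1−e_{t+1}, e_t−e_{t+1}) ·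
 C(n−e_{p+1}, e_{t+1}−e_{p+1}) · χ_e([1,t]) · χ_e([t+1,p+1])`. -/
theorem card_coordinate_subreps_preprojective_Ap1 (p t n : ℕ)
    (hp : 2 ≤ p) (ht1 : 1 ≤ t) (htp : t ≤ p) (e : ℕ → ℕ) (he : 1 ≤ e 1) :
    Set.ncard {T : ℕ → Finset ℕ |
        (∀ i, 1 ≤ i → i ≤ t → T i ⊆ Finset.Icc 1 (n + 1)) ∧
        (∀ i, t + 1 ≤ i → i ≤ p + 1 → T i ⊆ Finset.Icc 1 n) ∧
        (∀ i, 1 ≤ i → i ≤ p + 1 → (T i).card = e i) ∧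
        (∀ k, 1 ≤ k → k ≤ p → T (k + 1) ⊆ T k) ∧
        (∀ m ∈ T (p + 1), m + 1 ∈ T 1) ∧
        (∀ i, i < 1 ∨ p + 1 < i → T i = ∅)}
      = intChoose ((e 1 : ℤ) - 1) (e (p + 1) : ℤ) *
        intChoose ((n : ℤ) + 1 - e t) ((e 1 : ℤ) - e t) *
        intChoose ((n : ℤ) + 1 - e (t + 1)) ((e t : ℤ) - e (t + 1)) *
        intChoose ((n : ℤ) - e (p + 1)) ((e (t + 1) : ℤ) - e (p + 1)) *
        chiE e 1 t * chiE e (t + 1) (p + 1) :=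
  card_coordinate_subreps_preprojective_Ap1_general p t n ht1 htp e he
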